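/- In an orthomodular lattice X, for a ≤ b, the pair φ_*(x) = b ∧ x^⊥ (for x ≤ a) and φ^*(y) = a ∧ y^⊥ (for y ≤ b) is an antitone Galois connection from ↓a to ↓b, and the composite of φ with the canonical inclusion b : ↓b → X equals the canonical inclusion a : ↓a → X; conversely, if there exists a Galois connection ψ : ↓a → ↓b with b ∘ ψ = a, then a ≤ b. -/
import Mathlib


class Ortholattice (α : Type*) extends Lattice α, BoundedOrder α where
  ocompl : α → α
  ocompl_ocompl : ∀ x : α, ocompl (ocompl x) = x
  ocompl_antitone : ∀ x y : α, x ≤ y → ocompl y ≤ ocompl x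
  inf_ocompl : ∀ x : α, x ⊓ ocompl x = ⊥

postfix:max "ᗮ" => Ortholattice.ocompl

class OrthomodularLattice (α : Type*) extends Ortholattice α where
  orthomodular : ∀ x y : α, x ≤ y → y = x ⊔ (xᗮ ⊓ y)

/-- For a ≤ b in an orthomodular lattice: the pair φ_*(x) = b ⊓ xᗮ, φ^*(y) = a ⊓ yᗮ
is an antitone Galois connection ↓a → ↓b whose composite with the inclusion
b : ↓b → X is the inclusion a : ↓a → X; conversely, any Galois connection
ψ : ↓a → ↓b with b ∘ ψ = a forces a ≤ b. -/
theorem downset_order_reflects (X : Type*) [OrthomodularLattice X] (a b : X) :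
    (a ≤ b →
      (∀ x y : X, x ≤ a → y ≤ b → (y ≤ b ⊓ xᗮ ↔ x ≤ a ⊓ yᗮ)) ∧
      (∀ x : X, x ≤ a → (b ⊓ (b ⊓ xᗮ)ᗮ)ᗮ = xᗮ)) ∧
    (∀ (ψs : {x : X // x ≤ a} → {y : X // y ≤ b})
       (ψc : {y : X // y ≤ b} → {x : X // x ≤ a}),
      (∀ (x : {x : X // x ≤ a}) (y : {y : X // y ≤ b}), y ≤ ψs x ↔ x ≤ ψc y) →
      (∀ x : {x : X // x ≤ a}, (b ⊓ ((ψs x : X))ᗮ)ᗮ = ((x : X))ᗮ) →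
      a ≤ b) := by
  constructor
  · intro hab
    constructor
    · intro x y hx hy
      constructor
      · intro h
        refine le_inf hx ?_
        have h1 : y ≤ xᗮ := le_trans h inf_le_right
        have := Ortholattice.ocompl_antitone _ _ h1
        rw [Ortholattice.ocompl_ocompl] at this
        exact this
      · intro h
        refine le_inf hy ?_
        have h1 : x ≤ yᗮ := le_trans h inf_le_right
        have := Ortholattice.ocompl_antitone _ _ h1
        rw [Ortholattice.ocompl_ocompl] at this
        exact this
    · intro x hx
      have hxb : x ≤ b := le_trans hx hab
      have key : b ⊓ (b ⊓ xᗮ)ᗮ = x := by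
        set c := b ⊓ xᗮ with hc
        have hcx : c ≤ xᗮ := inf_le_right
        have hxc : x ≤ cᗮ := by
          have := Ortholattice.ocompl_antitone _ _ hcx
          rwa [Ortholattice.ocompl_ocompl] at this
        have hxd : x ≤ b ⊓ cᗮ := le_inf hxb hxc
        have hom := OrthomodularLattice.orthomodular x (b ⊓ cᗮ) hxd
        have hbot : xᗮ ⊓ (b ⊓ cᗮ) = ⊥ := by
          have h1 : xᗮ ⊓ (b ⊓ cᗮ) ≤ c ⊓ cᗮ := by
            refine le_inf ?_ (le_trans inf_le_right inf_le_right)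
            rw [hc]
            exact le_inf (le_trans inf_le_right inf_le_left) inf_le_left
          have h2 := Ortholattice.inf_ocompl c
          exact le_antisymm (h2 ▸ h1) bot_le
        rw [hbot, sup_bot_eq] at hom
        exact hom
      rw [key]
  · intro ψs ψc _ hcomp
    have h := hcomp ⟨a, le_refl a⟩
    have : b ⊓ ((ψs ⟨a, le_refl a⟩ : X))ᗮ = a := by
      have := congrArg Ortholattice.ocompl h
      rwa [Ortholattice.ocompl_ocompl, Ortholattice.ocompl_ocompl] at this
    calc a = b ⊓ _ := this.symm
    _ ≤ b := inf_le_left
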